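/- Fix Δ ∈ ℕ⁺ and let τ = {E} ⊆ σ with σ finite relational; all trees considered have height at most Δ. Suppose p(x̄,ȳ,z̄) is a closure type over σ such that p implies that every entry of ȳ belongs to cl(x̄), and that z̄ is nonempty. Suppose A is a σ-structure that expands a tree and A ⊨ p(ā,b̄,c̄) ∧ p(ā,b̄',c̄') where ā ∈ A^{|x̄|}, b̄, b̄' ∈ A^{|ȳ|}, c̄, c̄' ∈ A^{|z̄|}. Then b̄ = b̄', and hence |p(ā,A)| = |p(ā,b̄,A)|, where p(ā,A) = {(b̄,c̄) : A ⊨ p(ā,b̄,c̄)} and p(ā,b̄,A) = {c̄ : A ⊨ p(ā,b̄,c̄)}. -/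

import Mathlib

open Classical Filter
noncomputable section

namespace PaperTrees

/-! ### Trees -/

section Trees
variable {A : Type*} {B : Type*}

/-- Level `l` of an edge relation: level 0 = elements with no incoming edge (roots),
level `l+1` = children of level-`l` elements. -/
def Level (E : A → A → Prop) : ℕ → A → Prop
  | 0 => fun a => ∀ x, ¬ E x a
  | (l+1) => fun a => ∃ b, Level E l b ∧ E b a

def IsRoot (E : A → A → Prop) (a : A) : Prop := ∀ x, ¬ E x a

def IsLeaf (E : A → A → Prop) (a : A) : Prop := ∀ x, ¬ E a x

/-- A tree: `E b a` means `b` is the parent of `a`. -/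
structure IsTree (E : A → A → Prop) : Prop where
  asymm : ∀ a b, E a b → a ≠ b ∧ ¬ E b a
  root_unique : ∃! r, IsRoot E r
  parent_unique : ∀ a, ¬ IsRoot E a → ∃! b, E b a
  acyclic : ∀ a, ¬ Relation.TransGen E a a

def HeightLe (E : A → A → Prop) (h : ℕ) : Prop := ∀ l a, Level E l a → l ≤ h

def HasHeight (E : A → A → Prop) (h : ℕ) : Prop := (∃ a, Level E h a) ∧ HeightLe E h

/-- `a` is an ancestor of `b`: there is a directed path from `a` to `b`. -/
def Ancestor (E : A → A → Prop) (a b : A) : Prop := Relation.TransGen E a b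

/-- The closure of a set in a tree: the set together with the root and all
ancestors of its members. -/
def treeCl (E : A → A → Prop) (S : Set A) : Set A :=
  {a | a ∈ S ∨ IsRoot E a ∨ ∃ b ∈ S, Ancestor E a b}

def IsClosedSet (E : A → A → Prop) (S : Set A) : Prop := treeCl E S = S

def Sibling (E : A → A → Prop) (a b : A) : Prop := a ≠ b ∧ ∃ c, E c a ∧ E c b

def childSet (E : A → A → Prop) (a : A) : Set A := {x | E a x}

/-- The relation induced on a subset (induced substructure). -/
def InducedRel (E : A → A → Prop) (S : Set A) : S → S → Prop := fun x y => E x y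

/-- Isomorphism of binary relational structures. -/
def RelIso' (E : A → A → Prop) (E' : B → B → Prop) : Prop :=
  ∃ f : A ≃ B, ∀ x y, E x y ↔ E' (f x) (f y)

/-- `S` carries a subtree of `(A,E)` rooted at `a`. -/
def IsSubtreeRootedAt (E : A → A → Prop) (S : Set A) (a : A) : Prop :=
  (∃ h : a ∈ S, IsRoot (InducedRel E S) ⟨a, h⟩) ∧ IsTree (InducedRel E S)

/-- `NT E E' a`: the number of subtrees of `(A,E)` rooted at `a` and isomorphic to `(B,E')`. -/
def NT (E : A → A → Prop) (E' : B → B → Prop) (a : A) : ℕ :=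
  Set.ncard {S : Set A | IsSubtreeRootedAt E S a ∧ RelIso' (InducedRel E S) E'}

end Trees

/-! ### PLA*: syntax and semantics -/

/-- A (finite) σ-structure on domain `A`: a Bool-valued interpretation of every
relation symbol. -/
abbrev Struc (σ : Type) (ar : σ → ℕ) (A : Type) : Type := ∀ R : σ, (Fin (ar R) → A) → Bool

/-- Formulas of `PLA*(σ)` with variables in `ℕ`.  Connectives are continuous
functions `[0,1]^k → [0,1]`; aggregation functions are functions
`([0,1]^{<ω})^k → [0,1]` invariant under reordering of the entries of each
sequence; an aggregation node binds the (distinct) variables of `ys`. -/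
inductive PLA (σ : Type) (ar : σ → ℕ) : Type where
  | const : unitInterval → PLA σ ar
  | eqf : ℕ → ℕ → PLA σ ar
  | rel : (R : σ) → (Fin (ar R) → ℕ) → PLA σ ar
  | conn : (k : ℕ) → (C : (Fin k → unitInterval) → unitInterval) → Continuous C →
      (Fin k → PLA σ ar) → PLA σ ar
  | agg : (k : ℕ) → (F : (Fin k → List unitInterval) → unitInterval) →
      (∀ p q : Fin k → List unitInterval, (∀ i, List.Perm (p i) (q i)) → F p = F q) →
      (ys : List ℕ) → ys.Nodup → (Fin k → PLA σ ar) → (Fin k → PLA σ ar) → PLA σ ar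

/-- Update an assignment on the variables of the list `ys` by the tuple `b`. -/
def updMany {A : Type} (β : ℕ → A) (ys : List ℕ) (b : Fin ys.length → A) : ℕ → A :=
  fun v => if h : v ∈ ys then b ⟨ys.idxOf v, List.idxOf_lt_length_iff.mpr h⟩ else β v

/-- The value `A(φ(ā)) ∈ [0,1]` of a `PLA*`-formula in a finite structure under an
assignment. -/
def eval {σ : Type} {ar : σ → ℕ} {A : Type} [Fintype A] (S : Struc σ ar A) :
    PLA σ ar → (ℕ → A) → unitInterval
  | .const c, _ => c
  | .eqf u v, β => if β u = β v then 1 else 0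
  | .rel R t, β => if S R (fun i => β (t i)) then 1 else 0
  | .conn _ C _ f, β => C fun i => eval S (f i) β
  | .agg k F _ ys _ φs χs, β =>
      let L : List (Fin ys.length → A) := (Finset.univ : Finset (Fin ys.length → A)).toList
      let vals : Fin k → List unitInterval := fun i =>
        (L.filter fun b => decide (eval S (χs i) (updMany β ys b) = 1)).map
          fun b => eval S (φs i) (updMany β ys b)
      if ∀ i, vals i ≠ [] then F vals else 0

/-- Free variables (aggregation binds the variables of `ys`). -/
def freeVars {σ : Type} {ar : σ → ℕ} : PLA σ ar → Set ℕ
  | .const _ => ∅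
  | .eqf u v => {u, v}
  | .rel _ t => Set.range t
  | .conn _ _ _ f => ⋃ i, freeVars (f i)
  | .agg _ _ _ ys _ φs χs =>
      (((⋃ i, freeVars (φs i)) ∪ ⋃ i, freeVars (χs i)) \ {v | v ∈ ys})

/-- The relation symbols occurring in a formula. -/
def symbols {σ : Type} {ar : σ → ℕ} : PLA σ ar → Set σ
  | .const _ => ∅
  | .eqf _ _ => ∅
  | .rel R _ => {R}
  | .conn _ _ _ f => ⋃ i, symbols (f i)
  | .agg _ _ _ _ _ φs χs => (⋃ i, symbols (φs i)) ∪ ⋃ i, symbols (χs i)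

/-- No aggregation function occurs in the formula. -/
def AggFree {σ : Type} {ar : σ → ℕ} : PLA σ ar → Prop
  | .const _ => True
  | .eqf _ _ => True
  | .rel _ _ => True
  | .conn _ _ _ f => ∀ i, AggFree (f i)
  | .agg _ _ _ _ _ _ _ => False

/-- `AggOK P φ` holds iff every aggregation subformula
`F(φ₁,…,φ_k : z̄ : χ₁,…,χ_k)` of `φ` satisfies `P k F (χ₁,…,χ_k) z̄`. -/
def AggOK {σ : Type} {ar : σ → ℕ}
    (P : ∀ k : ℕ, ((Fin k → List unitInterval) → unitInterval) → (Fin k → PLA σ ar) → List ℕ → Prop) :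
    PLA σ ar → Prop
  | .const _ => True
  | .eqf _ _ => True
  | .rel _ _ => True
  | .conn _ _ _ f => ∀ i, AggOK P (f i)
  | .agg k F _ ys _ φs χs => P k F χs ys ∧ (∀ i, AggOK P (φs i)) ∧ ∀ i, AggOK P (χs i)

section Signature

variable {σ : Type} {ar : σ → ℕ}

/-- `S` interprets the symbol `e` exactly as the binary relation `E0`. -/
def IsExpansionOf (e : σ) (hE : ar e = 2) {A : Type} (E0 : A → A → Prop) (S : Struc σ ar A) : Prop :=
  ∀ t : Fin (ar e) → A, S e t = true ↔ E0 (t (Fin.cast hE.symm 0)) (t (Fin.cast hE.symm 1))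

/-- `S` expands some tree of height at most `Δ`. -/
def ExpandsTreeLe (e : σ) (hE : ar e = 2) (Δ : ℕ) {A : Type} (S : Struc σ ar A) : Prop :=
  ∃ E0 : A → A → Prop, IsTree E0 ∧ HeightLe E0 Δ ∧ IsExpansionOf e hE E0 S

/-- The canonical expansion of a tree interpreting every other relation symbol as empty;
used to express satisfaction of τ-formulas in the tree itself. -/
def tauStruc [DecidableEq σ] (e : σ) (hE : ar e = 2) {A : Type} (E0 : A → A → Prop) :
    Struc σ ar A :=
  fun R t =>
    if h : R = e then
      decide (E0 (t (Fin.cast (show (2:ℕ) = ar R by rw [h, hE]) 0))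
        (t (Fin.cast (show (2:ℕ) = ar R by rw [h, hE]) 1)))
    else false

/-! ### Atomic types and closure types -/

/-- Data of a conjunction of σ-literals in `n` variables: the literals asserted
positively and those asserted negatively. -/
structure AtomicTypeData (σ : Type) (ar : σ → ℕ) (n : ℕ) : Type where
  pos : Set ((R : σ) × (Fin (ar R) → Fin n))
  neg : Set ((R : σ) × (Fin (ar R) → Fin n))

/-- Satisfaction of an atomic type (which includes the inequalities `xᵢ ≠ xⱼ`). -/
def satAtomic {n : ℕ} {A : Type} (S : Struc σ ar A) (φ : AtomicTypeData σ ar n)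
    (t : Fin n → A) : Prop :=
  (∀ l ∈ φ.pos, S l.1 (fun i => t (l.2 i)) = true) ∧
  (∀ l ∈ φ.neg, S l.1 (fun i => t (l.2 i)) = false) ∧ Function.Injective t

/-- The `E`-literal on the pair of variables `(i, j)`. -/
def pairTup (e : σ) {n : ℕ} (i j : Fin n) : Fin (ar e) → Fin n :=
  fun s => if (s : ℕ) = 0 then i else j

/-- An atomic type over σ (with respect to trees of height at most Δ): it decides all
`E`-literals, contains all inequalities (built into `satAtomic`), and is satisfiable in
some expansion of some tree of height at most `Δ`. -/
def IsAtomicType (e : σ) (hE : ar e = 2) (Δ : ℕ) {n : ℕ} (φ : AtomicTypeData σ ar n) : Prop :=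
  (∀ i j : Fin n, (⟨e, pairTup e i j⟩ ∈ φ.pos ∨ ⟨e, pairTup e i j⟩ ∈ φ.neg)) ∧
  ∃ (A : Type) (_ : Fintype A) (S : Struc σ ar A) (t : Fin n → A),
    ExpandsTreeLe e hE Δ S ∧ satAtomic S φ t

/-- A complete atomic type decides every literal. -/
def CompleteAtomic {n : ℕ} (φ : AtomicTypeData σ ar n) : Prop :=
  ∀ (R : σ) (v : Fin (ar R) → Fin n), ⟨R, v⟩ ∈ φ.pos ∨ ⟨R, v⟩ ∈ φ.neg

/-- An atomic type over τ = {E} uses only `E`-literals. -/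
def TauAtomic (e : σ) {n : ℕ} (φ : AtomicTypeData σ ar n) : Prop :=
  (∀ l ∈ φ.pos, l.1 = e) ∧ ∀ l ∈ φ.neg, l.1 = e

/-- The tuple of values of an assignment on a list of variables. -/
def xtuple {A : Type} (β : ℕ → A) (xs : List ℕ) : Fin xs.length → A := fun i => β (xs.get i)

/-- `p` (a 0/1-valued formula with free variables among `xs`) is, on all σ-structures
expanding trees of height at most `Δ`, equivalent to
`∃ w̄ (φ(x̄,w̄) ∧ "x̄w̄ is closed")` where `φ` is an atomic type implying that each `wᵢ`
lies in the closure of `x̄`. -/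
def IsClosureTypeData (e : σ) (hE : ar e = 2) (Δ : ℕ) (p : PLA σ ar) (xs : List ℕ)
    (m : ℕ) (φ : AtomicTypeData σ ar (xs.length + m)) : Prop :=
  IsAtomicType e hE Δ φ ∧
  (∀ (A : Type) (_ : Fintype A) (S : Struc σ ar A) (E0 : A → A → Prop),
     IsTree E0 → HeightLe E0 Δ → IsExpansionOf e hE E0 S →
     ∀ t : Fin (xs.length + m) → A, satAtomic S φ t →
       ∀ i : Fin m, t (Fin.natAdd xs.length i) ∈
         treeCl E0 (Set.range fun j : Fin xs.length => t (Fin.castAdd m j))) ∧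
  (∀ (A : Type) (_ : Fintype A) (S : Struc σ ar A) (E0 : A → A → Prop),
     IsTree E0 → HeightLe E0 Δ → IsExpansionOf e hE E0 S →
     ∀ β : ℕ → A,
       (eval S p β = 1 ∨ eval S p β = 0) ∧
       (eval S p β = 1 ↔ ∃ w : Fin m → A,
          satAtomic S φ (Fin.append (xtuple β xs) w) ∧
          IsClosedSet E0 (Set.range (Fin.append (xtuple β xs) w))))

/-- A closure type over σ, in the (distinct) free variables `xs`. -/
def IsClosureType (e : σ) (hE : ar e = 2) (Δ : ℕ) (p : PLA σ ar) (xs : List ℕ) : Prop :=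
  xs.Nodup ∧ freeVars p ⊆ {v | v ∈ xs} ∧
  ∃ (m : ℕ) (φ : AtomicTypeData σ ar (xs.length + m)), IsClosureTypeData e hE Δ p xs m φ

/-- A complete closure type over σ. -/
def IsCompleteClosureType (e : σ) (hE : ar e = 2) (Δ : ℕ) (p : PLA σ ar) (xs : List ℕ) : Prop :=
  xs.Nodup ∧ freeVars p ⊆ {v | v ∈ xs} ∧
  ∃ (m : ℕ) (φ : AtomicTypeData σ ar (xs.length + m)),
    IsClosureTypeData e hE Δ p xs m φ ∧ CompleteAtomic φ

/-- A closure type over τ = {E}. -/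
def IsClosureTypeTau (e : σ) (hE : ar e = 2) (Δ : ℕ) (p : PLA σ ar) (xs : List ℕ) : Prop :=
  xs.Nodup ∧ freeVars p ⊆ {v | v ∈ xs} ∧ symbols p ⊆ {e} ∧
  ∃ (m : ℕ) (φ : AtomicTypeData σ ar (xs.length + m)),
    IsClosureTypeData e hE Δ p xs m φ ∧ TauAtomic e φ

/-- Semantic implication on finite σ-structures expanding trees of height at most `Δ`. -/
def ImpOnTrees (e : σ) (hE : ar e = 2) (Δ : ℕ) (p q : PLA σ ar) : Prop :=
  ∀ (A : Type) (_ : Fintype A) (S : Struc σ ar A), ExpandsTreeLe e hE Δ S →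
    ∀ β : ℕ → A, eval S p β = 1 → eval S q β = 1

/-- `q` is (up to equivalence) the restriction `p↾τ` of the closure type `p` to τ. -/
def IsTauRestriction (e : σ) (hE : ar e = 2) (Δ : ℕ) (p q : PLA σ ar) (xs : List ℕ) : Prop :=
  IsClosureTypeTau e hE Δ q xs ∧ ImpOnTrees e hE Δ p q ∧
  ∀ q', IsClosureTypeTau e hE Δ q' xs → ImpOnTrees e hE Δ p q' → ImpOnTrees e hE Δ q q'

/-- The ȳ-rank of the closure type `p(x̄,ȳ)` is `r`: on any realization of `p↾τ` in a tree,
`|cl(b̄) ∖ cl(ā)| = r`. -/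
def HasRank (e : σ) (hE : ar e = 2) (Δ : ℕ) (p : PLA σ ar) (xs ys : List ℕ) (r : ℕ) : Prop :=
  ∃ q, IsTauRestriction e hE Δ p q (xs ++ ys) ∧
    ∀ (A : Type) (_ : Fintype A) (S : Struc σ ar A) (E0 : A → A → Prop),
      IsTree E0 → HeightLe E0 Δ → IsExpansionOf e hE E0 S →
      ∀ β : ℕ → A, eval S q β = 1 →
        (treeCl E0 (β '' {v | v ∈ ys}) \ treeCl E0 (β '' {v | v ∈ xs})).ncard = r

/-- Self-contained closure type: it implies that its variables form a closed set. -/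
def SelfContained (e : σ) (hE : ar e = 2) (Δ : ℕ) (p : PLA σ ar) (xs : List ℕ) : Prop :=
  ∀ (A : Type) (_ : Fintype A) (S : Struc σ ar A) (E0 : A → A → Prop),
    IsTree E0 → HeightLe E0 Δ → IsExpansionOf e hE E0 S →
    ∀ β : ℕ → A, eval S p β = 1 → IsClosedSet E0 (β '' {v | v ∈ xs})

/-- `ψ` is (on expansions of trees of height at most `Δ`) a closure-basic formula
`⋀ᵢ (pᵢ(x̄) → cᵢ)` where the `pᵢ` are complete closure types, `cᵢ ∈ [0,1]`, `∧ = min` and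
`→` is the Łukasiewicz implication. -/
def IsClosureBasic (e : σ) (hE : ar e = 2) (Δ : ℕ) (ψ : PLA σ ar) (xs : List ℕ) : Prop :=
  ∃ (k : ℕ) (p : Fin (k+1) → PLA σ ar) (c : Fin (k+1) → ℝ),
    (∀ i, IsCompleteClosureType e hE Δ (p i) xs ∧ c i ∈ Set.Icc (0:ℝ) 1) ∧
    ∀ (A : Type) (_ : Fintype A) (S : Struc σ ar A), ExpandsTreeLe e hE Δ S → ∀ β : ℕ → A,
      (eval S ψ β : ℝ) =
        Finset.univ.inf' Finset.univ_nonempty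
          (fun i => min 1 (1 - (eval S (p i) β : ℝ) + c i))

end Signature

end PaperTrees
/-! ### Base sequences of trees -/

namespace PaperTrees

/-- Assumption 6.4 on the base sequence of trees. -/
structure TreeSeqAssumption (V : ℕ → Type) [∀ n, Fintype (V n)]
    (En : ∀ n, V n → V n → Prop) (Δ : ℕ) (g1 g2 g3 g4 : ℕ → ℝ) : Prop where
  delta_pos : 0 < Δ
  g1_pos : ∀ n, 0 < g1 n
  g2_pos : ∀ n, 0 < g2 n
  g3_pos : ∀ n, 0 < g3 n
  g4_pos : ∀ n, 0 < g4 n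
  g1_infty : Filter.Tendsto g1 Filter.atTop Filter.atTop
  g2_infty : Filter.Tendsto g2 Filter.atTop Filter.atTop
  g3_infty : Filter.Tendsto g3 Filter.atTop Filter.atTop
  g4_infty : Filter.Tendsto g4 Filter.atTop Filter.atTop
  g3_log : ∀ α : ℝ, Filter.Tendsto (fun n => g3 n - α * Real.log n) Filter.atTop Filter.atTop
  g1_g3 : Filter.Tendsto (fun n => g1 n - g3 n) Filter.atTop Filter.atTop
  g2_over_g1 : Filter.Tendsto (fun n => g2 n / g1 n) Filter.atTop (nhds 0)
  g4_poly : ∃ P : Polynomial ℝ, ∀ n, g4 n = P.eval (n : ℝ)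
  tree : ∀ n, IsTree (En n)
  height : ∀ n, HasHeight (En n) Δ
  leaves_level : ∀ n, ∀ a : V n, IsLeaf (En n) a → Level (En n) Δ a
  child_lb : ∀ n, ∀ a : V n, ¬ IsLeaf (En n) a → g1 n ≤ (Set.ncard (childSet (En n) a) : ℝ)
  child_ub : ∀ n, ∀ a : V n, ¬ IsLeaf (En n) a → (Set.ncard (childSet (En n) a) : ℝ) ≤ g4 n
  siblings : ∀ (B : Type) [Fintype B] (E' : B → B → Prop), IsTree E' →
      (∃ h, 1 ≤ h ∧ HasHeight E' h) →
      ∀ᶠ n in Filter.atTop, ∀ a : V n, ¬ IsRoot (En n) a → 0 < NT (En n) E' a →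
        g3 n ≤ (Set.ncard {b : V n | Sibling (En n) a b ∧
          (NT (En n) E' a : ℝ) - g2 n < (NT (En n) E' b : ℝ) ∧
          (NT (En n) E' b : ℝ) < (NT (En n) E' a : ℝ) + g2 n} : ℝ)

/-- The Light Assumption on the base sequence of trees. -/
structure TreeSeqLight (V : ℕ → Type) [∀ n, Fintype (V n)]
    (En : ∀ n, V n → V n → Prop) (Δ : ℕ) (g1 g4 : ℕ → ℝ) : Prop where
  delta_pos : 0 < Δ
  g1_pos : ∀ n, 0 < g1 n
  g4_pos : ∀ n, 0 < g4 n
  g1_infty : Filter.Tendsto g1 Filter.atTop Filter.atTop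
  g4_poly : ∃ P : Polynomial ℝ, ∀ n, g4 n = P.eval (n : ℝ)
  tree : ∀ n, IsTree (En n)
  height : ∀ n, HasHeight (En n) Δ
  leaves_level : ∀ n, ∀ a : V n, IsLeaf (En n) a → Level (En n) Δ a
  child_lb : ∀ n, ∀ a : V n, ¬ IsLeaf (En n) a → g1 n ≤ (Set.ncard (childSet (En n) a) : ℝ)
  child_ub : ∀ n, ∀ a : V n, ¬ IsLeaf (En n) a → (Set.ncard (childSet (En n) a) : ℝ) ≤ g4 n

/-! ### PLA*-networks and the induced probability distributions -/

section Net
variable {σ : Type} {ar : σ → ℕ}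

/-- A `PLA*(σ)`-network based on τ = {e}: a DAG on `σ ∖ {e}` together with a formula
`θ R ∈ PLA*(par(R) ∪ {e})` (with free variables among `x₁,…,x_{ar R}`) for every
`R ∈ σ ∖ {e}`. -/
structure PLANet (σ : Type) (ar : σ → ℕ) (e : σ) where
  prec : σ → σ → Prop
  acyclic : ∀ R, ¬ Relation.TransGen prec R R
  edges_ne : ∀ R R', prec R R' → R ≠ e ∧ R' ≠ e
  θ : σ → PLA σ ar
  symbols_ok : ∀ R, R ≠ e → symbols (θ R) ⊆ {R' | prec R' R} ∪ {e}
  fv_ok : ∀ R, R ≠ e → freeVars (θ R) ⊆ {v | v < ar R}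

/-- The assignment sending variable `i < k` to `t i`. -/
def tupAssign {A : Type} (ha : Nonempty A) {k : ℕ} (t : Fin k → A) : ℕ → A :=
  fun v => if h : v < k then t ⟨v, h⟩ else ha.some

/-- The probability which the network `N` assigns to the σ-structure `S` as an expansion of
the tree `(A, E0)`: the product, over all `R ∈ σ ∖ {e}` and all tuples `ā`, of
`S(θ_R(ā))` if `R(ā)` holds and `1 - S(θ_R(ā))` otherwise.  (Since
`θ_R ∈ PLA*(par(R) ∪ τ)`, its value in `S` coincides with its value in the reduct of `S` to
the symbols of earlier levels of the DAG, so this agrees with the level-by-level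
definition of the induced distribution.) -/
def netProb [Fintype σ] [DecidableEq σ] (e : σ) (hE : ar e = 2) (N : PLANet σ ar e)
    {A : Type} [Fintype A] [DecidableEq A] (ha : Nonempty A) (E0 : A → A → Prop)
    (S : Struc σ ar A) : ℝ :=
  if IsExpansionOf e hE E0 S then
    ∏ R : σ, if R = e then 1 else
      ∏ t : Fin (ar R) → A,
        if S R t then (eval S (N.θ R) (tupAssign ha t) : ℝ)
        else 1 - (eval S (N.θ R) (tupAssign ha t) : ℝ)
  else 0

/-- The probability of a set of σ-structures under the distribution induced by the network. -/
def netPr [Fintype σ] [DecidableEq σ] (e : σ) (hE : ar e = 2) (N : PLANet σ ar e)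
    {A : Type} [Fintype A] [DecidableEq A] (ha : Nonempty A) (E0 : A → A → Prop)
    (X : Set (Struc σ ar A)) : ℝ :=
  ∑ S : Struc σ ar A, if S ∈ X then netProb e hE N ha E0 S else 0

variable [Fintype σ] [DecidableEq σ]
variable (V : ℕ → Type) [∀ n, Fintype (V n)] [∀ n, DecidableEq (V n)]
variable (En : ∀ n, V n → V n → Prop) (hne : ∀ n, Nonempty (V n))

/-- Asymptotic equivalence of two `PLA*(σ)`-formulas with respect to the sequence of
probability distributions induced by the network on the expansions of the trees `T_n`. -/
def AsympEquiv (e : σ) (hE : ar e = 2) (N : PLANet σ ar e) (φ ψ : PLA σ ar) : Prop :=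
  ∀ ε : ℝ, 0 < ε →
    Filter.Tendsto (fun n => netPr e hE N (hne n) (En n)
        {S | IsExpansionOf e hE (En n) S ∧
          ∀ β : ℕ → V n, |(eval S φ β : ℝ) - (eval S ψ β : ℝ)| ≤ ε})
      Filter.atTop (nhds 1)

/-- `(p, ptau, q)` is `(α, ε)`-balanced in `S` (with `ys` the aggregated variables). -/
def BalancedIn {A : Type} [Fintype A] (S : Struc σ ar A) (p ptau q : PLA σ ar)
    (ys : List ℕ) (α ε : ℝ) : Prop :=
  ∀ β : ℕ → A, eval S q β = 1 →
    (α - ε) * (({b : Fin ys.length → A | eval S ptau (updMany β ys b) = 1}).ncard : ℝ) ≤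
      (({b : Fin ys.length → A | eval S p (updMany β ys b) = 1 ∧
          eval S ptau (updMany β ys b) = 1}).ncard : ℝ) ∧
    (({b : Fin ys.length → A | eval S p (updMany β ys b) = 1 ∧
        eval S ptau (updMany β ys b) = 1}).ncard : ℝ) ≤
      (α + ε) * (({b : Fin ys.length → A | eval S ptau (updMany β ys b) = 1}).ncard : ℝ)

/-- `(p, ptau, q)` is `α`-balanced with respect to the network. -/
def Balanced (e : σ) (hE : ar e = 2) (N : PLANet σ ar e) (p ptau q : PLA σ ar)
    (ys : List ℕ) (α : ℝ) : Prop :=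
  ∀ ε : ℝ, 0 < ε →
    Filter.Tendsto (fun n => netPr e hE N (hne n) (En n)
        {S | IsExpansionOf e hE (En n) S ∧ BalancedIn S p ptau q ys α ε})
      Filter.atTop (nhds 1)

/-- `p ∧ q` is cofinally satisfiable: for infinitely many `n` some expansion of `T_n`
satisfies both. -/
def CofinallySat2 (e : σ) (hE : ar e = 2) (p q : PLA σ ar) : Prop :=
  ∃ᶠ n in Filter.atTop, ∃ S : Struc σ ar (V n), IsExpansionOf e hE (En n) S ∧
    ∃ β : ℕ → V n, eval S p β = 1 ∧ eval S q β = 1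

/-- The closure type `p(x̄,ȳ)` (with `x̄ = xs`, `ȳ = ys`) is ȳ-positive with respect
to the network: for every complete closure type `q(x̄)` such that `p ∧ q` is cofinally
satisfiable, the triple `(p, p↾τ, q)` is `α`-balanced for some `α > 0`. -/
def PosType (e : σ) (hE : ar e = 2) (N : PLANet σ ar e) (Δ : ℕ)
    (p : PLA σ ar) (xs ys : List ℕ) : Prop :=
  ∀ q : PLA σ ar, IsCompleteClosureType e hE Δ q xs → CofinallySat2 V En e hE p q →
    ∃ ptau, IsTauRestriction e hE Δ p ptau (xs ++ ys) ∧
      ∃ α : ℝ, 0 < α ∧ Balanced V En hne e hE N p ptau q ys α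

end Net

/-! ### Convergence testing, continuous and admissible aggregation functions -/

/-- `p` is a convergence testing sequence for parameters `c j` and `al j` (`j < k`):
lengths strictly increase, entries are nonempty sequences, and for every family of
pairwise disjoint intervals `Iv j ⊆ [0,1]`, open in the induced topology on `[0,1]`,
with `c j ∈ Iv j`, eventually all entries lie in `⋃ j, Iv j` and the proportion of
entries in `Iv j` tends to `al j`. -/
def CTFor (p : ℕ → List unitInterval) {k : ℕ} (c : Fin k → ℝ) (al : Fin k → ℝ) : Prop :=
  (∀ n, p n ≠ []) ∧ (∀ n, (p n).length < (p (n+1)).length) ∧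
  ∀ Iv : Fin k → Set ℝ,
    (∀ j, Iv j ⊆ Set.Icc (0:ℝ) 1) → (∀ j, (Iv j).OrdConnected) →
    (∀ j, ∃ U : Set ℝ, IsOpen U ∧ Iv j = U ∩ Set.Icc (0:ℝ) 1) →
    (Pairwise fun i j => Disjoint (Iv i) (Iv j)) →
    (∀ j, c j ∈ Iv j) →
    (∀ᶠ n in Filter.atTop, ∀ x ∈ p n, (x : ℝ) ∈ ⋃ j, Iv j) ∧
    ∀ j, Filter.Tendsto
      (fun n => (((p n).filter (fun x => decide ((x:ℝ) ∈ Iv j))).length : ℝ) / ((p n).length : ℝ))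
      Filter.atTop (nhds (al j))

/-- Convergence-testing sequences of `m`-tuples. -/
def CTForM {m : ℕ} (p : ℕ → Fin m → List unitInterval) (k : Fin m → ℕ)
    (c : ∀ i, Fin (k i) → ℝ) (al : ∀ i, Fin (k i) → ℝ) : Prop :=
  ∀ i, CTFor (fun n => p n i) (c i) (al i)

/-- `F` is ct-continuous with respect to the given parameters. -/
def CTContinuousAt {m : ℕ} (F : (Fin m → List unitInterval) → unitInterval)
    (k : Fin m → ℕ) (c : ∀ i, Fin (k i) → ℝ) (al : ∀ i, Fin (k i) → ℝ) : Prop :=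
  ∀ p q : ℕ → Fin m → List unitInterval, CTForM p k c al → CTForM q k c al →
    Filter.Tendsto (fun n => |(F (p n) : ℝ) - (F (q n) : ℝ)|) Filter.atTop (nhds 0)

/-- `F` is continuous (strongly admissible): ct-continuous for every choice of parameters. -/
def ContinuousAggM {m : ℕ} (F : (Fin m → List unitInterval) → unitInterval) : Prop :=
  ∀ (k : Fin m → ℕ) (c al : ∀ i, Fin (k i) → ℝ),
    (∀ i j, c i j ∈ Set.Icc (0:ℝ) 1) → (∀ i j, al i j ∈ Set.Icc (0:ℝ) 1) →
    CTContinuousAt F k c al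

/-- `F` is admissible: ct-continuous for every choice of parameters with all `al i j > 0`. -/
def AdmissibleAggM {m : ℕ} (F : (Fin m → List unitInterval) → unitInterval) : Prop :=
  ∀ (k : Fin m → ℕ) (c al : ∀ i, Fin (k i) → ℝ),
    (∀ i j, c i j ∈ Set.Icc (0:ℝ) 1) → (∀ i j, al i j ∈ Set.Icc (0:ℝ) 1) →
    (∀ i j, 0 < al i j) → CTContinuousAt F k c al

end PaperTrees

/-! A realisation of a closure type extends to a closed tuple whose edge pattern is fixed by
the atomic type. Walking up from an entry of `x̄` inside such a tuple, each parent sits at an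
index determined by that pattern, and parents in a tree are unique; so two realisations that
agree on `x̄` agree on everything in `cl(x̄)`, in particular on `ȳ`. Hence `(b̄, c̄) ↦ c̄` is a
bijection from `p(ā, A)` onto `p(ā, b̄, A)`. -/

namespace PaperTrees

section TreeTuples

variable {A ι : Type*} {E : A → A → Prop}

theorem IsTree.eq_of_rel_of_rel (ht : IsTree E) {a b c : A} (ha : E a c) (hb : E b c) :
    a = b :=
  (ht.parent_unique c fun h => h a ha).unique ha hb

theorem treeCl_mono {s s' : Set A} (h : s ⊆ s') : treeCl E s ⊆ treeCl E s' :=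
  fun _ ha => ha.imp (@h _) (Or.imp_right fun ⟨b, hb, hab⟩ => ⟨b, h hb, hab⟩)

theorem IsClosedSet.mem_of_rel {s : Set A} (hs : IsClosedSet E s) {a b : A} (hb : b ∈ s)
    (hab : E a b) : a ∈ s :=
  hs.subset (Or.inr (Or.inr ⟨b, hb, .single hab⟩))

variable {t t' : ι → A}

theorem isRoot_of_isClosedSet_range (hcl' : IsClosedSet E (Set.range t'))
    (hedge : ∀ i j, E (t' i) (t' j) → E (t i) (t j)) {j : ι} (hj : IsRoot E (t j)) :
    IsRoot E (t' j) := by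
  intro a ha
  obtain ⟨i, rfl⟩ := hcl'.mem_of_rel ⟨j, rfl⟩ ha
  exact hj _ (hedge i j ha)

theorem eq_of_ancestor_of_isClosedSet_range (ht : IsTree E) (hcl : IsClosedSet E (Set.range t))
    (hedge : ∀ i j, E (t i) (t j) → E (t' i) (t' j)) {j k : ι} (hk : t k = t' k)
    (hjk : Ancestor E (t j) (t k)) : t j = t' j := by
  suffices ∀ b, Ancestor E (t j) b → ∀ k, t k = b → t' k = b → t j = t' j from
    this _ hjk k rfl hk.symm
  intro b hb
  induction hb with
  | single hab =>
    rintro k rfl hk'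
    exact ht.eq_of_rel_of_rel hab (hk' ▸ hedge j k hab)
  | tail _ hcb ih =>
    rintro k rfl hk'
    obtain ⟨i, rfl⟩ := hcl.mem_of_rel ⟨k, rfl⟩ hcb
    exact ih i rfl (ht.eq_of_rel_of_rel (hk' ▸ hedge i k hcb) hcb)

theorem eq_of_mem_treeCl_image (ht : IsTree E) (hinj : Function.Injective t)
    (hcl : IsClosedSet E (Set.range t)) (hcl' : IsClosedSet E (Set.range t'))
    (hedge : ∀ i j, E (t i) (t j) ↔ E (t' i) (t' j)) {K : Set ι}
    (hK : ∀ k ∈ K, t k = t' k) {j : ι} (hj : t j ∈ treeCl E (t '' K)) : t j = t' j := by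
  obtain ⟨k, hk, hkj⟩ | hroot | ⟨_, ⟨k, hk, rfl⟩, hanc⟩ := hj
  · obtain rfl := hinj hkj
    exact hK k hk
  · exact ht.root_unique.unique hroot
      (isRoot_of_isClosedSet_range hcl' (fun i j => (hedge i j).2) hroot)
  · exact eq_of_ancestor_of_isClosedSet_range ht hcl (fun i j => (hedge i j).1) (hK k hk) hanc

end TreeTuples

section Assignments

variable {A : Type}

theorem updMany_apply_of_notMem (β : ℕ → A) (L : List ℕ) (u : Fin L.length → A) {v : ℕ}
    (hv : v ∉ L) : updMany β L u v = β v :=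
  dif_neg hv

theorem updMany_xtuple {β γ : ℕ → A} {L : List ℕ} (h : ∀ v ∉ L, γ v = β v) :
    updMany β L (xtuple γ L) = γ := by
  funext v
  by_cases hv : v ∈ L
  · simp only [updMany, dif_pos hv, xtuple, List.idxOf_get]
  · rw [updMany_apply_of_notMem _ _ _ hv, h v hv]

theorem updMany_injective (β : ℕ → A) {L : List ℕ} (hL : L.Nodup) :
    Function.Injective (updMany β L) := by
  intro u u' h
  funext i
  have hi := congrFun h (L.get i)
  simp only [updMany, dif_pos (List.get_mem L i)] at hi
  have hidx : L.idxOf (L.get i) = i := hL.idxOf_getElem i i.isLt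
  convert hi using 2 <;> exact Fin.ext hidx.symm

theorem ncard_setOf_updMany (β : ℕ → A) {L : List ℕ} (hL : L.Nodup) (P : (ℕ → A) → Prop) :
    {u : Fin L.length → A | P (updMany β L u)}.ncard =
      {γ : ℕ → A | P γ ∧ ∀ v ∉ L, γ v = β v}.ncard := by
  rw [← Set.ncard_image_of_injective _ (updMany_injective β hL)]
  congr 1
  ext γ
  constructor
  · rintro ⟨u, hu, rfl⟩
    exact ⟨hu, fun v hv => updMany_apply_of_notMem β L u hv⟩
  · rintro ⟨hγ, hout⟩
    exact ⟨xtuple γ L, show P _ by rwa [updMany_xtuple hout], updMany_xtuple hout⟩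

end Assignments

section ClosureTypes

variable {σ : Type} {ar : σ → ℕ} {e : σ} {hE : ar e = 2} {A : Type}
  {S : Struc σ ar A} {E0 : A → A → Prop}

theorem satisfies_pairTup_iff (hexp : IsExpansionOf e hE E0 S) {N : ℕ} (u : Fin N → A)
    (i j : Fin N) : S e (fun s => u (pairTup e i j s)) = true ↔ E0 (u i) (u j) := by
  rw [hexp]
  simp [pairTup]

theorem IsAtomicType.edge_iff {Δ N : ℕ} {φ : AtomicTypeData σ ar N}
    (hφ : IsAtomicType e hE Δ φ) (hexp : IsExpansionOf e hE E0 S) {t t' : Fin N → A}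
    (ht : satAtomic S φ t) (ht' : satAtomic S φ t') (i j : Fin N) :
    E0 (t i) (t j) ↔ E0 (t' i) (t' j) := by
  rw [← satisfies_pairTup_iff hexp, ← satisfies_pairTup_iff hexp]
  rcases hφ.1 i j with h | h
  · simp only [ht.1 _ h, ht'.1 _ h]
  · simp only [ht.2.1 _ h, ht'.2.1 _ h]

theorem IsClosureType.apply_eq_of_mem_treeCl [Fintype A] {Δ : ℕ} {p : PLA σ ar}
    {vars xs : List ℕ} (hp : IsClosureType e hE Δ p vars) (hE0 : IsTree E0) (hh : HeightLe E0 Δ)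
    (hexp : IsExpansionOf e hE E0 S) {β β' : ℕ → A} (hβ : eval S p β = 1)
    (hβ' : eval S p β' = 1) (hxs : ∀ x ∈ xs, x ∈ vars) (hagree : ∀ x ∈ xs, β x = β' x)
    {y : ℕ} (hy : y ∈ vars) (hycl : β y ∈ treeCl E0 (β '' {v | v ∈ xs})) : β y = β' y := by
  obtain ⟨-, -, m, φ, hφ, -, hsem⟩ := hp
  obtain ⟨w, hw, hwcl⟩ := ((hsem A inferInstance S E0 hE0 hh hexp β).2).1 hβ
  obtain ⟨w', hw', hwcl'⟩ := ((hsem A inferInstance S E0 hE0 hh hexp β').2).1 hβ'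
  have ht : ∀ i, Fin.append (xtuple β vars) w (Fin.castAdd m i) = β (vars.get i) := by
    simp [xtuple]
  have ht' : ∀ i, Fin.append (xtuple β' vars) w' (Fin.castAdd m i) = β' (vars.get i) := by
    simp [xtuple]
  obtain ⟨iy, rfl⟩ := List.mem_iff_get.mp hy
  rw [← ht, ← ht']
  refine eq_of_mem_treeCl_image hE0 hw.2.2 hwcl hwcl' (hφ.edge_iff hexp hw hw')
    (K := Fin.castAdd m '' {i | vars.get i ∈ xs}) ?_ ?_
  · rintro _ ⟨i, hi, rfl⟩
    rw [ht, ht']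
    exact hagree _ hi
  · rw [ht]
    refine treeCl_mono ?_ hycl
    rintro _ ⟨x, hx, rfl⟩
    obtain ⟨i, rfl⟩ := List.mem_iff_get.mp (hxs x hx)
    exact ⟨Fin.castAdd m i, ⟨i, hx, rfl⟩, ht i⟩

end ClosureTypes

theorem statement_8_general
    {σ : Type} {ar : σ → ℕ} (e : σ) (hE : ar e = 2) (Δ : ℕ)
    (p : PLA σ ar) (xs ys zs : List ℕ)
    (hp : IsClosureType e hE Δ p (xs ++ ys ++ zs))
    (hcl : ∀ (A : Type) (_ : Fintype A) (S : Struc σ ar A) (E0 : A → A → Prop),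
      IsTree E0 → HeightLe E0 Δ → IsExpansionOf e hE E0 S →
      ∀ β : ℕ → A, eval S p β = 1 → ∀ y ∈ ys, β y ∈ treeCl E0 (β '' {v | v ∈ xs}))
    (A : Type) [Fintype A] (S : Struc σ ar A) (hS : ExpandsTreeLe e hE Δ S) :
    (∀ β β' : ℕ → A, (∀ x ∈ xs, β x = β' x) →
        eval S p β = 1 → eval S p β' = 1 → ∀ y ∈ ys, β y = β' y) ∧
    ∀ β : ℕ → A, eval S p β = 1 →
      Set.ncard {t : Fin (ys ++ zs).length → A | eval S p (updMany β (ys ++ zs) t) = 1} =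
      Set.ncard {t : Fin zs.length → A | eval S p (updMany β zs t) = 1} := by
  obtain ⟨E0, hE0, hh, hexp⟩ := hS
  have hnd : (xs ++ (ys ++ zs)).Nodup := List.append_assoc xs ys zs ▸ hp.1
  have hyz : (ys ++ zs).Nodup := hnd.of_append_right
  have hxs : ∀ x ∈ xs, x ∉ ys ++ zs := fun x hx h => List.disjoint_of_nodup_append hnd hx h
  have huniq : ∀ β β' : ℕ → A, (∀ x ∈ xs, β x = β' x) →
      eval S p β = 1 → eval S p β' = 1 → ∀ y ∈ ys, β y = β' y :=
    fun β β' hagree hβ hβ' y hy => hp.apply_eq_of_mem_treeCl hE0 hh hexp hβ hβ'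
      (by simp +contextual) hagree (by simp [hy]) (hcl A _ S E0 hE0 hh hexp β hβ y hy)
  refine ⟨huniq, fun β hβ => ?_⟩
  rw [ncard_setOf_updMany β hyz (eval S p · = 1),
    ncard_setOf_updMany β hyz.of_append_right (eval S p · = 1)]
  congr 1
  ext γ
  refine and_congr_right fun hγ => ⟨fun h v hv => ?_, fun h v hv => h v (by simp_all)⟩
  by_cases hvy : v ∈ ys
  · exact huniq γ β (fun x hx => h x (hxs x hx)) hγ hβ v hvy
  · exact h v (by simp [hvy, hv])

/-- Lemma 5.16: if `p(x̄,ȳ,z̄)` is a closure type over σ implying that every entry of `ȳ`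
lies in `cl(x̄)`, with `z̄` nonempty, and `A` is a σ-structure expanding a tree (of height
at most `Δ`) satisfying `p(ā,b̄,c̄)` and `p(ā,b̄',c̄')`, then `b̄ = b̄'`; hence
`|p(ā,A)| = |p(ā,b̄,A)|`. -/
theorem statement_8
    {σ : Type} {ar : σ → ℕ} (e : σ) (hE : ar e = 2) (Δ : ℕ) (hΔ : 0 < Δ)
    (p : PLA σ ar) (xs ys zs : List ℕ)
    (hp : IsClosureType e hE Δ p (xs ++ ys ++ zs))
    (hzs : zs ≠ [])
    (hcl : ∀ (A : Type) (_ : Fintype A) (S : Struc σ ar A) (E0 : A → A → Prop),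
      IsTree E0 → HeightLe E0 Δ → IsExpansionOf e hE E0 S →
      ∀ β : ℕ → A, eval S p β = 1 → ∀ y ∈ ys, β y ∈ treeCl E0 (β '' {v | v ∈ xs}))
    (A : Type) [Fintype A] (S : Struc σ ar A) (hS : ExpandsTreeLe e hE Δ S) :
    (∀ β β' : ℕ → A, (∀ x ∈ xs, β x = β' x) →
        eval S p β = 1 → eval S p β' = 1 → ∀ y ∈ ys, β y = β' y) ∧
    ∀ β : ℕ → A, eval S p β = 1 →
      Set.ncard {t : Fin (ys ++ zs).length → A | eval S p (updMany β (ys ++ zs) t) = 1} =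
      Set.ncard {t : Fin zs.length → A | eval S p (updMany β zs t) = 1} :=
  statement_8_general e hE Δ p xs ys zs hp hcl A S hS

end PaperTrees
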